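/- Let 𝒜 = {a,b,c,d} and let x, y ∈ 𝒜⁺ be positive words such that y is obtained from x by a cyclic block interchange realized by decompositions x' = x_1 x_2 x_3 x_4 and y' = x_1 x_4 x_3 x_2 (where x' and y' are cyclic permutations of x and y respectively). If ν(x) − ν(y) = 6, then this block interchange does not cut a consecutive pair of letters c: for no i ∈ {1,2,3,4} does the block x_i end in the letter c while the cyclically next block x_{i+1 mod 4} begins with the letter c. -/

import Mathlib

/-- `w` is a cyclic block interchange of `v`. -/
def IsCBI {A : Type*} (v w : List A) : Prop :=
  ∃ v' w' : List A, List.IsRotated v' v ∧ List.IsRotated w' w ∧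
    ∃ w1 w2 w3 w4 : List A, v' = w1 ++ w2 ++ w3 ++ w4 ∧ w' = w1 ++ w4 ++ w3 ++ w2

/-- The four-letter alphabet `𝒜 = {a,b,c,d}`. -/
inductive Letter where
  | a | b | c | d
deriving DecidableEq

open Letter

/-- `ν_{xy}(u)`: the number of occurrences of `xy` as a cyclic subword of `u`. -/
def nuPair (p q : Letter) (u : List Letter) : ℕ :=
  (List.range u.length).countP
    (fun i => decide (u[i]? = some p ∧ u[(i + 1) % u.length]? = some q))

/-- The function `ν = ν_{aa} + ν_{bc} + ν_{cd} + ν_{db} − ν_{ac} − ν_{cc} − ν_{dd} −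
ν_{da} − ν_{bb}`. -/
def nu (u : List Letter) : ℤ :=
  (nuPair a a u : ℤ) + nuPair b c u + nuPair c d u + nuPair d b u
    - nuPair a c u - nuPair c c u - nuPair d d u - nuPair d a u - nuPair b b u

/-! `nu` is the cyclic sum of `pairWeight` over adjacent letters, so the two sides of a block
interchange differ only in their four junction terms, each of absolute value at most `1`.
A `cc` cut contributes `-1` to `ν(x)`, so `ν(x) − ν(y) = 6` forces the seven other junction
terms to be extremal. Then `x₃ | x₄` weighs `1` in `x`, and `c | x₄` weighs `-1` in `y`, so `x₄`
begins with `c`; but then the junction `x₃ | x₂` of `y` reads `x₃ | c` like `x₃ | x₄` and weighs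
`1`, not `-1`. Rotating the four blocks reduces every cut to the one between `x₁` and `x₂`. -/

section CyclicSum

variable {α M : Type*} [AddCommMonoid M] (f : α → α → M)

def optWeight : Option α → Option α → M
  | some x, some y => f x y
  | _, _ => 0

def pathSum : List α → M
  | x :: y :: l => f x y + pathSum (y :: l)
  | _ => 0

def cycleSum (l : List α) : M := pathSum f l + optWeight f l.getLast? l.head?

@[simp] lemma optWeight_none_left (q : Option α) : optWeight f none q = 0 := rfl

@[simp] lemma optWeight_none_right (p : Option α) : optWeight f p none = 0 := by
  cases p <;> rfl

@[simp] lemma optWeight_some_some (x y : α) : optWeight f (some x) (some y) = f x y := rfl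

@[simp] lemma pathSum_nil : pathSum f ([] : List α) = 0 := rfl

@[simp] lemma pathSum_singleton (x : α) : pathSum f [x] = 0 := rfl

@[simp] lemma pathSum_cons_cons (x y : α) (l : List α) :
    pathSum f (x :: y :: l) = f x y + pathSum f (y :: l) := rfl

lemma pathSum_cons (x : α) (l : List α) :
    pathSum f (x :: l) = optWeight f (some x) l.head? + pathSum f l := by
  cases l <;> simp

lemma pathSum_append (u v : List α) :
    pathSum f (u ++ v) = pathSum f u + pathSum f v + optWeight f u.getLast? v.head? := by
  induction u with
  | nil => simp
  | cons x u ih =>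
    rcases eq_or_ne u [] with rfl | hu
    · simp [pathSum_cons, add_comm]
    · rw [List.cons_append, pathSum_cons, pathSum_cons, ih, List.head?_append_of_ne_nil _ hu,
        List.getLast?_cons_of_ne_nil hu]
      abel

lemma cycleSum_append_comm (u v : List α) : cycleSum f (u ++ v) = cycleSum f (v ++ u) := by
  rcases eq_or_ne u [] with rfl | hu
  · simp
  rcases eq_or_ne v [] with rfl | hv
  · simp
  simp only [cycleSum, pathSum_append, List.getLast?_append_of_ne_nil _ hu,
    List.getLast?_append_of_ne_nil _ hv, List.head?_append_of_ne_nil _ hu,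
    List.head?_append_of_ne_nil _ hv]
  abel

lemma cycleSum_rotate (l : List α) (n : ℕ) : cycleSum f (l.rotate n) = cycleSum f l := by
  rw [List.rotate_eq_drop_append_take_mod, cycleSum_append_comm, List.take_append_drop]

lemma List.IsRotated.cycleSum_eq {l l' : List α} (h : l ~r l') : cycleSum f l = cycleSum f l' := by
  obtain ⟨n, rfl⟩ := h
  exact (cycleSum_rotate f l n).symm

lemma sum_map_zip_append_singleton (x : α) (l : List α) (y : α) :
    (((x :: l).zip (l ++ [y])).map fun p => f p.1 p.2).sum =
      pathSum f (x :: l) + f ((x :: l).getLast (List.cons_ne_nil x l)) y := by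
  induction l generalizing x with
  | nil => simp
  | cons z l ih => simp [ih, add_assoc]

lemma cycleSum_eq_sum_zip_rotate (l : List α) :
    cycleSum f l = ((l.zip (l.rotate 1)).map fun p => f p.1 p.2).sum := by
  cases l with
  | nil => simp [cycleSum]
  | cons x l =>
    rw [List.rotate_cons_succ, List.rotate_zero, sum_map_zip_append_singleton, cycleSum,
      List.getLast?_eq_some_getLast (List.cons_ne_nil x l)]
    rfl

end CyclicSum

lemma List.countP_range_getElem?_eq_count {α : Type*} [BEq α] [LawfulBEq α] (l : List α)
    (x : α) : (List.range l.length).countP (fun i => l[i]? == some x) = l.count x := by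
  have hmap : (List.range l.length).map (fun i => l[i]?) = l.map some :=
    List.ext_getElem (by simp) (by simp)
  have := congrArg (List.countP (· == some x)) hmap
  simp only [List.countP_map, Function.comp_def, Option.some_beq_some] at this
  rw [this, List.count_eq_countP]

def pairWeight : Letter → Letter → ℤ
  | a, a | b, c | c, d | d, b => 1
  | a, c | c, c | d, d | d, a | b, b => -1
  | _, _ => 0

lemma nuPair_eq_count (p q : Letter) (u : List Letter) :
    nuPair p q u = (u.zip (u.rotate 1)).count (p, q) := by
  rw [← List.countP_range_getElem?_eq_count, nuPair, List.length_zip, List.length_rotate,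
    min_self]
  refine List.countP_congr fun i hi => ?_
  have hi : i < u.length := List.mem_range.mp hi
  have hi' : (i + 1) % u.length < u.length := Nat.mod_lt _ (by omega)
  simp [hi, hi', List.getElem_rotate]

lemma sum_map_pairWeight_eq (z : List (Letter × Letter)) :
    (z.map fun p => pairWeight p.1 p.2).sum =
      (z.count (a, a) : ℤ) + z.count (b, c) + z.count (c, d) + z.count (d, b)
        - z.count (a, c) - z.count (c, c) - z.count (d, d) - z.count (d, a) - z.count (b, b) := by
  induction z with
  | nil => simp
  | cons p z ih =>
    obtain ⟨x, y⟩ := p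
    simp only [List.map_cons, List.sum_cons, List.count_cons, ih]
    cases x <;> cases y <;> simp [pairWeight] <;> ring

lemma nu_eq_cycleSum (u : List Letter) : nu u = cycleSum pairWeight u := by
  rw [cycleSum_eq_sum_zip_rotate, sum_map_pairWeight_eq, nu]
  simp only [nuPair_eq_count]

lemma nu_append_comm (u v : List Letter) : nu (u ++ v) = nu (v ++ u) := by
  rw [nu_eq_cycleSum, nu_eq_cycleSum, cycleSum_append_comm]

lemma List.IsRotated.nu_eq {u v : List Letter} (h : u ~r v) : nu u = nu v := by
  rw [nu_eq_cycleSum, nu_eq_cycleSum, h.cycleSum_eq]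

lemma abs_optWeight_pairWeight_le (p q : Option Letter) : |optWeight pairWeight p q| ≤ 1 := by
  rcases p with _ | x <;> rcases q with _ | y <;> simp only [optWeight_none_left,
    optWeight_none_right, optWeight_some_some, abs_zero, zero_le_one]
  cases x <;> cases y <;> decide

lemma eq_c_of_pairWeight_c_eq_neg_one {y : Letter} (h : pairWeight c y = -1) : y = c := by
  cases y <;> simp_all [pairWeight]

lemma nu_sub_nu_swap_blocks (A B C D : List Letter) :
    nu (A ++ B ++ C ++ D) - nu (A ++ D ++ C ++ B) =
      optWeight pairWeight A.getLast? (B ++ C ++ D).head?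
        + optWeight pairWeight B.getLast? (C ++ D).head?
        + optWeight pairWeight C.getLast? D.head?
        + optWeight pairWeight (A ++ B ++ C ++ D).getLast? (A ++ B ++ C ++ D).head?
      - (optWeight pairWeight A.getLast? (D ++ C ++ B).head?
        + optWeight pairWeight D.getLast? (C ++ B).head?
        + optWeight pairWeight C.getLast? B.head?
        + optWeight pairWeight (A ++ D ++ C ++ B).getLast? (A ++ D ++ C ++ B).head?) := by
  simp only [nu_eq_cycleSum, cycleSum, List.append_assoc, pathSum_append]
  ring

lemma nu_sub_nu_swap_blocks_ne_six {A B C D : List Letter} (hA : A.getLast? = some c)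
    (hB : B.head? = some c) : nu (A ++ B ++ C ++ D) - nu (A ++ D ++ C ++ B) ≠ 6 := by
  intro h6
  have hBCD : (B ++ C ++ D).head? = some c := by simp [hB]
  rw [nu_sub_nu_swap_blocks, hA, hB, hBCD, optWeight_some_some,
    show pairWeight c c = -1 from rfl] at h6
  have hw := fun p q => abs_le.mp (abs_optWeight_pairWeight_le p q)
  obtain ⟨hCD, hCc, hcD⟩ : optWeight pairWeight C.getLast? D.head? = 1 ∧
      optWeight pairWeight C.getLast? (some c) = -1 ∧
      optWeight pairWeight (some c) (D ++ C ++ B).head? = -1 := by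
    refine ⟨?_, ?_, ?_⟩ <;>
    linarith [hw B.getLast? (C ++ D).head?, hw C.getLast? D.head?,
      hw (A ++ B ++ C ++ D).getLast? (A ++ B ++ C ++ D).head?,
      hw (some c) (D ++ C ++ B).head?, hw D.getLast? (C ++ B).head?, hw C.getLast? (some c),
      hw (A ++ D ++ C ++ B).getLast? (A ++ D ++ C ++ B).head?]
  obtain ⟨x, hx⟩ : ∃ x, D.head? = some x := by
    rcases hD : D.head? with _ | x
    · simp [hD] at hCD
    · exact ⟨x, rfl⟩
  rw [show (D ++ C ++ B).head? = some x by simp [hx], optWeight_some_some] at hcD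
  rw [hx, eq_c_of_pairWeight_c_eq_neg_one hcD, hCc] at hCD
  norm_num at hCD

lemma nu_sub_nu_swap_blocks_rotate (A B C D : List Letter) :
    nu (B ++ C ++ D ++ A) - nu (B ++ A ++ D ++ C) =
      nu (A ++ B ++ C ++ D) - nu (A ++ D ++ C ++ B) := by
  rw [nu_append_comm (B ++ C ++ D), show B ++ A ++ D ++ C = B ++ (A ++ D ++ C) by simp,
    nu_append_comm B]
  simp only [List.append_assoc]

/-- If `y` is obtained from `x` by a cyclic block interchange realized by decompositions
`x' = x₁x₂x₃x₄` and `y' = x₁x₄x₃x₂` (with `x', y'` cyclic permutations of `x, y`), and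
`ν(x) − ν(y) = 6`, then the interchange does not cut a consecutive pair of letters `c`:
no block ends in `c` while the cyclically next block begins with `c`. -/
theorem nu_six_no_cc_cut (x y x' y' x1 x2 x3 x4 : List Letter)
    (hx : List.IsRotated x' x) (hy : List.IsRotated y' y)
    (hx' : x' = x1 ++ x2 ++ x3 ++ x4) (hy' : y' = x1 ++ x4 ++ x3 ++ x2)
    (h6 : nu x - nu y = 6) :
    ¬ (x1.getLast? = some c ∧ x2.head? = some c) ∧
    ¬ (x2.getLast? = some c ∧ x3.head? = some c) ∧
    ¬ (x3.getLast? = some c ∧ x4.head? = some c) ∧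
    ¬ (x4.getLast? = some c ∧ x1.head? = some c) := by
  rw [← hx.nu_eq, ← hy.nu_eq, hx', hy'] at h6
  have h6₂ := (nu_sub_nu_swap_blocks_rotate x1 x2 x3 x4).trans h6
  have h6₃ := (nu_sub_nu_swap_blocks_rotate x2 x3 x4 x1).trans h6₂
  have h6₄ := (nu_sub_nu_swap_blocks_rotate x3 x4 x1 x2).trans h6₃
  exact ⟨fun h => nu_sub_nu_swap_blocks_ne_six h.1 h.2 h6,
    fun h => nu_sub_nu_swap_blocks_ne_six h.1 h.2 h6₂,
    fun h => nu_sub_nu_swap_blocks_ne_six h.1 h.2 h6₃,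
    fun h => nu_sub_nu_swap_blocks_ne_six h.1 h.2 h6₄⟩
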